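/- The inequality Ψ₂ < p + s holds if and only if B > 2(1 − p − s)²/(1 − (1 − p − s)²). -/
import Mathlib


/-- Threshold Ψ₂. -/
noncomputable def Ψ₂ (p s B : ℝ) : ℝ :=
  -(1 - p - s) * (1 + 1 / B) +
    Real.sqrt (1 - p - s) * Real.sqrt ((1 - p - s) * (1 + 1 / B) ^ 2 + 2 / B)

theorem stmt_3 (p s B : ℝ) (hs : 0 < s) (hsp : s < p) (hps : p + s < 1) (hB : 0 < B) :
    Ψ₂ p s B < p + s ↔ B > 2 * (1 - p - s) ^ 2 / (1 - (1 - p - s) ^ 2) := by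
  have hq0 : 0 < 1 - p - s := by linarith
  set q := 1 - p - s with hq
  have hq1 : q < 1 := by simp only [hq]; linarith
  have hps' : p + s = 1 - q := by simp only [hq]; ring
  have hy : (0 : ℝ) < 1 + q / B := by positivity
  have h1 : 0 < 1 - q ^ 2 := by nlinarith
  have hB2 : (0 : ℝ) < B ^ 2 := by positivity
  unfold Ψ₂
  rw [← hq, ← Real.sqrt_mul hq0.le, hps', gt_iff_lt, div_lt_iff₀ h1]
  have step1 : -q * (1 + 1 / B) + Real.sqrt (q * (q * (1 + 1 / B) ^ 2 + 2 / B)) < 1 - q ↔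
      Real.sqrt (q * (q * (1 + 1 / B) ^ 2 + 2 / B)) < 1 + q / B := by
    have hid : -q * (1 + 1 / B) + (1 + q / B) = 1 - q := by field_simp; ring
    constructor <;> intro h <;> linarith
  rw [step1, Real.sqrt_lt' hy]
  have e1 : q * (q * (1 + 1 / B) ^ 2 + 2 / B) * B ^ 2 = q ^ 2 * (B + 1) ^ 2 + 2 * q * B := by
    field_simp
  have e2 : (1 + q / B) ^ 2 * B ^ 2 = (B + q) ^ 2 := by
    field_simp
  constructor <;> intro h
  · have h' := mul_lt_mul_of_pos_right h hB2
    rw [e1, e2] at h'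
    nlinarith
  · have h' : q ^ 2 * (B + 1) ^ 2 + 2 * q * B < (B + q) ^ 2 := by nlinarith
    rw [← e1, ← e2] at h'
    exact lt_of_mul_lt_mul_right h' hB2.le
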